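/- Fix t>0 and let μ be a probability measure on (𝒞_t^*,Σ_t^*). Define the anchor α_t(Z) := inf Z for Z ≠ ∅ and α_t(∅) := 0, set p := μ({∅}), and let κ := (α_t)_*(μ(· ∩ {Z ≠ ∅})) be the anchor pushforward on (0,t]. Assume κ and Lebesgue measure on (0,t] are mutually absolutely continuous, and let h : (0,t] → (0,∞) be a Borel version of d(Leb↾(0,t])/dκ. Define the probability measure μ^{unif} on 𝒞_t^* by dμ^{unif}(Z) = C^{-1}·(1_{{∅}}(Z) + 1_{{Z ≠ ∅}}(Z)·h(α_t(Z))) dμ(Z), where C is the normalizing constant. Then: (i) μ^{unif} and μ are mutually absolutely continuous; (ii) C = p + t and μ^{unif}({∅}) = p/(p+t); (iii) under the conditional law μ^{unif}(· | Z ≠ ∅), the anchor α_t(Z) is uniformly distributed on (0,t). -/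

import Mathlib

open MeasureTheory Set
open scoped ENNReal NNReal

namespace RandomSets

/-- Closed subsets of `[0,t]`, the hyperspace `𝒞_t^*`. -/
def CS (t : ℝ) : Type := {F : Set ℝ // IsClosed F ∧ F ⊆ Set.Icc 0 t}

/-- The Fell topology on `𝒞_t^*`: generated by the hit sets of relatively open
subsets of `[0,t]` and the miss sets of compact subsets of `[0,t]`. -/
def fellTopStar (t : ℝ) : TopologicalSpace (CS t) :=
  TopologicalSpace.generateFrom
    ({S | ∃ U : Set ℝ, IsOpen U ∧
        S = {F : CS t | (F.1 ∩ (U ∩ Set.Icc 0 t)).Nonempty}} ∪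
     {S | ∃ K : Set ℝ, IsCompact K ∧ K ⊆ Set.Icc 0 t ∧
        S = {F : CS t | F.1 ∩ K = ∅}})

instance (t : ℝ) : TopologicalSpace (CS t) := fellTopStar t

/-- `Σ_t^*`, the Borel σ-field of the Fell topology. -/
instance (t : ℝ) : MeasurableSpace (CS t) := borel (CS t)

/-- The empty configuration. -/
noncomputable def emptyCS (t : ℝ) : CS t := ⟨∅, isClosed_empty, Set.empty_subset _⟩

open Classical in
/-- The anchor map `α_t(Z) = inf Z` for `Z ≠ ∅`, `α_t(∅) = 0`. -/
noncomputable def anchor (t : ℝ) (Z : CS t) : ℝ :=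
  if Z.1.Nonempty then sInf Z.1 else 0

open Classical in
/-- The spread map `diam_t(Z) = sup Z - inf Z` for `Z ≠ ∅`, `diam_t(∅) = 0`. -/
noncomputable def spread (t : ℝ) (Z : CS t) : ℝ :=
  if Z.1.Nonempty then sSup Z.1 - sInf Z.1 else 0

open Classical in
/-- The Palm-uniformization weight `1_{{∅}}(Z) + 1_{{Z ≠ ∅}}(Z) · h(α_t(Z))`. -/
noncomputable def palmWeight (t : ℝ) (h : ℝ → ℝ) : CS t → ℝ≥0∞ :=
  fun Z => if Z.1.Nonempty then ENNReal.ofReal (h (anchor t Z)) else 1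

/-- The Palm uniformization `μ^{unif}` of `μ`:
`dμ^{unif}(Z) = C⁻¹ (1_{{∅}}(Z) + 1_{{Z ≠ ∅}}(Z)·h(α_t(Z))) dμ(Z)`. -/
noncomputable def palmUnif (t : ℝ) (h : ℝ → ℝ) (μ : Measure (CS t)) : Measure (CS t) :=
  (∫⁻ Z, palmWeight t h Z ∂μ)⁻¹ • μ.withDensity (palmWeight t h)

end RandomSets

/-! On `{Z ≠ ∅}` the weight is `h ∘ α_t`, and pushing a density of the form `g ∘ α_t` forward
under `α_t` just puts the density `g` on the pushforward. So the weighted anchor law of the nonempty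
configurations is `h · κ = Leb` on `(0,t]`: they receive total mass `t` and uniform anchors, while `∅`
keeps its mass `p`. Mutual absolute continuity holds because `κ ≪ Leb` forces `α_t ∈ (0,t]`, where
`h > 0`, for `μ`-a.e. nonempty `Z`. -/

namespace MeasureTheory

variable {α β : Type*} [MeasurableSpace α] [MeasurableSpace β]

lemma map_withDensity_comp (μ : Measure α) {f : α → β} (hf : Measurable f) {g : β → ℝ≥0∞}
    (hg : Measurable g) :
    (μ.withDensity (g ∘ f)).map f = (μ.map f).withDensity g := by
  ext s hs
  rw [Measure.map_apply hf hs, withDensity_apply _ (hf hs), withDensity_apply _ hs,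
    setLIntegral_map hs hg hf, Function.comp_def]

end MeasureTheory

namespace ProbabilityTheory

variable {Ω : Type*} [MeasurableSpace Ω]

lemma cond_smul (μ : Measure Ω) (s : Set Ω) {c : ℝ≥0∞} (hc₀ : c ≠ 0) (hc : c ≠ ∞) :
    (c • μ)[|s] = μ[|s] := by
  rw [cond, cond, Measure.smul_apply, smul_eq_mul, Measure.restrict_smul, smul_smul,
    ENNReal.mul_inv (Or.inl hc₀) (Or.inl hc), mul_right_comm, ENNReal.inv_mul_cancel hc₀ hc,
    one_mul]

end ProbabilityTheory

open ProbabilityTheory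

namespace RandomSets

instance (t : ℝ) : BorelSpace (CS t) := ⟨rfl⟩

variable {t : ℝ}

lemma isOpen_hit {U : Set ℝ} (hU : IsOpen U) :
    IsOpen {F : CS t | (F.1 ∩ (U ∩ Icc 0 t)).Nonempty} :=
  TopologicalSpace.isOpen_generateFrom_of_mem (Or.inl ⟨U, hU, rfl⟩)

lemma measurableSet_setOf_nonempty : MeasurableSet {Z : CS t | Z.1.Nonempty} := by
  have hit_univ : {Z : CS t | Z.1.Nonempty} = {F : CS t | (F.1 ∩ (univ ∩ Icc 0 t)).Nonempty} := by
    ext F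
    simp [inter_eq_left.mpr F.2.2]
  exact hit_univ ▸ (isOpen_hit isOpen_univ).measurableSet

lemma compl_setOf_nonempty : {Z : CS t | Z.1.Nonempty}ᶜ = {emptyCS t} := by
  ext Z
  simp only [mem_compl_iff, mem_ofPred_eq, not_nonempty_iff_eq_empty, mem_singleton_iff]
  exact ⟨fun hZ => Subtype.ext hZ, fun hZ => hZ ▸ rfl⟩

lemma measurableSet_singleton_emptyCS : MeasurableSet {emptyCS t} :=
  compl_setOf_nonempty (t := t) ▸ measurableSet_setOf_nonempty.compl

lemma anchor_lt_iff_of_nonempty {Z : CS t} (hZ : Z.1.Nonempty) (a : ℝ) :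
    anchor t Z < a ↔ (Z.1 ∩ (Iio a ∩ Icc 0 t)).Nonempty := by
  have hbdd : BddBelow Z.1 := bddBelow_Icc.mono Z.2.2
  rw [anchor, if_pos hZ]
  refine ⟨fun hlt => ⟨sInf Z.1, Z.2.1.csInf_mem hZ hbdd, hlt, Z.2.2 (Z.2.1.csInf_mem hZ hbdd)⟩,
    fun ⟨x, hxZ, hxa, _⟩ => (csInf_le hbdd hxZ).trans_lt hxa⟩

lemma measurable_anchor : Measurable (anchor t) := by
  refine measurable_of_Iio fun a => ?_
  have hpre : anchor t ⁻¹' Iio a = {F : CS t | (F.1 ∩ (Iio a ∩ Icc 0 t)).Nonempty} ∪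
      ({Z : CS t | Z.1.Nonempty}ᶜ ∩ {_Z | 0 < a}) := by
    ext Z
    by_cases hZ : Z.1.Nonempty
    · simp [anchor_lt_iff_of_nonempty hZ, hZ]
    · simp [anchor, not_nonempty_iff_eq_empty.mp hZ]
  rw [hpre]
  exact (isOpen_hit isOpen_Iio).measurableSet.union
    (measurableSet_setOf_nonempty.compl.inter (MeasurableSet.const _))

variable {h : ℝ → ℝ}

lemma palmWeight_of_nonempty {Z : CS t} (hZ : Z.1.Nonempty) :
    palmWeight t h Z = ENNReal.ofReal (h (anchor t Z)) :=
  if_pos hZ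

lemma palmWeight_emptyCS : palmWeight t h (emptyCS t) = 1 :=
  if_neg Set.not_nonempty_empty

lemma measurable_palmWeight (hh : Measurable h) : Measurable (palmWeight t h) :=
  Measurable.ite measurableSet_setOf_nonempty
    (hh.comp measurable_anchor).ennreal_ofReal measurable_const

lemma palmWeight_ae_ne_zero (μ : Measure (CS t)) (hpos : ∀ x ∈ Ioc (0 : ℝ) t, 0 < h x)
    (hκ : (μ.restrict {Z : CS t | Z.1.Nonempty}).map (anchor t) ≪ volume.restrict (Ioc 0 t)) :
    ∀ᵐ Z ∂μ, palmWeight t h Z ≠ 0 := by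
  have hanchor : ∀ᵐ Z ∂μ.restrict {Z : CS t | Z.1.Nonempty}, anchor t Z ∈ Ioc 0 t :=
    ae_of_ae_map measurable_anchor.aemeasurable (hκ.ae_le (ae_restrict_mem measurableSet_Ioc))
  filter_upwards [(ae_restrict_iff' measurableSet_setOf_nonempty).mp hanchor] with Z hZ
  by_cases hne : Z.1.Nonempty
  · rw [palmWeight_of_nonempty hne]
    exact (ENNReal.ofReal_pos.mpr (hpos _ (hZ hne))).ne'
  · simp [palmWeight, hne]

lemma withDensity_palmWeight_emptyCS (μ : Measure (CS t)) (hh : Measurable h) :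
    μ.withDensity (palmWeight t h) {emptyCS t} = μ {emptyCS t} := by
  rw [withDensity_apply _ measurableSet_singleton_emptyCS,
    lintegral_singleton' (measurable_palmWeight hh), palmWeight_emptyCS, one_mul]

lemma restrict_withDensity_palmWeight (μ : Measure (CS t)) :
    (μ.withDensity (palmWeight t h)).restrict {Z : CS t | Z.1.Nonempty}
      = (μ.restrict {Z : CS t | Z.1.Nonempty}).withDensity
          ((fun x => ENNReal.ofReal (h x)) ∘ anchor t) := by
  rw [restrict_withDensity measurableSet_setOf_nonempty]
  exact withDensity_congr_ae <| (ae_restrict_iff' measurableSet_setOf_nonempty).mpr <|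
    ae_of_all _ fun _ => palmWeight_of_nonempty

section Density

variable {μ : Measure (CS t)} (hh : Measurable h)
  (hdens : ((μ.restrict {Z : CS t | Z.1.Nonempty}).map (anchor t)).withDensity
      (fun x => ENNReal.ofReal (h x)) = volume.restrict (Ioc 0 t))
include hh hdens

lemma map_anchor_restrict_withDensity_palmWeight :
    ((μ.withDensity (palmWeight t h)).restrict {Z : CS t | Z.1.Nonempty}).map (anchor t)
      = volume.restrict (Ioc 0 t) := by
  rw [restrict_withDensity_palmWeight, map_withDensity_comp _ measurable_anchor hh.ennreal_ofReal,
    hdens]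

lemma withDensity_palmWeight_setOf_nonempty :
    μ.withDensity (palmWeight t h) {Z : CS t | Z.1.Nonempty} = ENNReal.ofReal t := by
  rw [← Measure.restrict_apply_univ, ← preimage_univ (f := anchor t),
    ← Measure.map_apply measurable_anchor MeasurableSet.univ,
    map_anchor_restrict_withDensity_palmWeight hh hdens]
  simp

lemma lintegral_palmWeight :
    ∫⁻ Z, palmWeight t h Z ∂μ = μ {emptyCS t} + ENNReal.ofReal t := by
  rw [← setLIntegral_univ, ← withDensity_apply _ MeasurableSet.univ,
    ← measure_add_measure_compl measurableSet_setOf_nonempty, compl_setOf_nonempty,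
    withDensity_palmWeight_setOf_nonempty hh hdens,
    withDensity_palmWeight_emptyCS μ hh, add_comm]

lemma map_anchor_cond_palmUnif (hC₀ : ∫⁻ Z, palmWeight t h Z ∂μ ≠ 0)
    (hC : ∫⁻ Z, palmWeight t h Z ∂μ ≠ ∞) :
    (palmUnif t h μ)[|{Z : CS t | Z.1.Nonempty}].map (anchor t)
      = (ENNReal.ofReal t)⁻¹ • volume.restrict (Ioo 0 t) := by
  rw [palmUnif, cond_smul _ _ (ENNReal.inv_ne_zero.mpr hC) (ENNReal.inv_ne_top.mpr hC₀),
    ProbabilityTheory.cond, Measure.map_smul, map_anchor_restrict_withDensity_palmWeight hh hdens,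
    withDensity_palmWeight_setOf_nonempty hh hdens, Measure.restrict_congr_set Ioo_ae_eq_Ioc]

end Density

lemma palmUnif_absolutelyContinuous (μ : Measure (CS t)) : palmUnif t h μ ≪ μ :=
  (withDensity_absolutelyContinuous μ _).smul_left _

lemma absolutelyContinuous_palmUnif {μ : Measure (CS t)} (hh : Measurable h)
    (hw : ∀ᵐ Z ∂μ, palmWeight t h Z ≠ 0) (hC : ∫⁻ Z, palmWeight t h Z ∂μ ≠ ∞) :
    μ ≪ palmUnif t h μ :=
  (withDensity_absolutelyContinuous' (measurable_palmWeight hh).aemeasurable hw).smul_right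
    (ENNReal.inv_ne_zero.mpr hC)

lemma palmUnif_emptyCS (μ : Measure (CS t)) (hh : Measurable h) :
    palmUnif t h μ {emptyCS t} = μ {emptyCS t} / ∫⁻ Z, palmWeight t h Z ∂μ := by
  rw [palmUnif, Measure.smul_apply, smul_eq_mul, withDensity_palmWeight_emptyCS μ hh,
    ENNReal.div_eq_inv_mul]

theorem palm_uniformization_general
    (t : ℝ) (ht : 0 < t)
    (μ : Measure (CS t)) [IsProbabilityMeasure μ]
    (h : ℝ → ℝ) (hhmeas : Measurable h) (hhpos : ∀ x ∈ Set.Ioc (0:ℝ) t, 0 < h x)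
    (hκac : Measure.map (anchor t) (μ.restrict {Z : CS t | Z.1.Nonempty})
        ≪ volume.restrict (Set.Ioc (0:ℝ) t))
    (hdens : (Measure.map (anchor t) (μ.restrict {Z : CS t | Z.1.Nonempty})).withDensity
        (fun x => ENNReal.ofReal (h x)) = volume.restrict (Set.Ioc (0:ℝ) t)) :
    (palmUnif t h μ ≪ μ ∧ μ ≪ palmUnif t h μ) ∧
    ((∫⁻ Z, palmWeight t h Z ∂μ) = μ {emptyCS t} + ENNReal.ofReal t ∧
      palmUnif t h μ {emptyCS t} = μ {emptyCS t} / (μ {emptyCS t} + ENNReal.ofReal t)) ∧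
    (Measure.map (anchor t)
        (ProbabilityTheory.cond (palmUnif t h μ) {Z : CS t | Z.1.Nonempty})
      = (ENNReal.ofReal t)⁻¹ • volume.restrict (Set.Ioo (0:ℝ) t)) := by
  have hC := lintegral_palmWeight hhmeas hdens
  have hC₀ : ∫⁻ Z, palmWeight t h Z ∂μ ≠ 0 := by simp [hC, ht]
  have hC_top : ∫⁻ Z, palmWeight t h Z ∂μ ≠ ∞ := by simp [hC]
  exact ⟨⟨palmUnif_absolutelyContinuous μ,
      absolutelyContinuous_palmUnif hhmeas (palmWeight_ae_ne_zero μ hhpos hκac) hC_top⟩,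
    ⟨hC, by rw [palmUnif_emptyCS μ hhmeas, hC]⟩, map_anchor_cond_palmUnif hhmeas hdens hC₀ hC_top⟩

/-- Lemma 4.10, Palm uniformization: let `μ` be a probability
measure on `𝒞_t^*` whose anchor pushforward `κ = (α_t)_*(μ(· ∩ {Z ≠ ∅}))` is
mutually absolutely continuous with Lebesgue measure on `(0,t]`, and let `h` be a
Borel version of `d(Leb|(0,t])/dκ`.  Then the Palm uniformization `μ^{unif}`
satisfies: (i) `μ^{unif} ∼ μ`; (ii) the normalizing constant is `C = p + t` where
`p = μ({∅})`, and `μ^{unif}({∅}) = p/(p+t)`; (iii) conditionally on `{Z ≠ ∅}`, the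
anchor is uniformly distributed on `(0,t)`. -/
theorem palm_uniformization
    (t : ℝ) (ht : 0 < t)
    (μ : Measure (CS t)) [IsProbabilityMeasure μ]
    (h : ℝ → ℝ) (hhmeas : Measurable h) (hhpos : ∀ x ∈ Set.Ioc (0:ℝ) t, 0 < h x)
    (hκac : Measure.map (anchor t) (μ.restrict {Z : CS t | Z.1.Nonempty})
        ≪ volume.restrict (Set.Ioc (0:ℝ) t))
    (hacκ : volume.restrict (Set.Ioc (0:ℝ) t)
        ≪ Measure.map (anchor t) (μ.restrict {Z : CS t | Z.1.Nonempty}))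
    (hdens : (Measure.map (anchor t) (μ.restrict {Z : CS t | Z.1.Nonempty})).withDensity
        (fun x => ENNReal.ofReal (h x)) = volume.restrict (Set.Ioc (0:ℝ) t)) :
    (palmUnif t h μ ≪ μ ∧ μ ≪ palmUnif t h μ) ∧
    ((∫⁻ Z, palmWeight t h Z ∂μ) = μ {emptyCS t} + ENNReal.ofReal t ∧
      palmUnif t h μ {emptyCS t} = μ {emptyCS t} / (μ {emptyCS t} + ENNReal.ofReal t)) ∧
    (Measure.map (anchor t)
        (ProbabilityTheory.cond (palmUnif t h μ) {Z : CS t | Z.1.Nonempty})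
      = (ENNReal.ofReal t)⁻¹ • volume.restrict (Set.Ioo (0:ℝ) t)) :=
  palm_uniformization_general t ht μ h hhmeas hhpos hκac hdens

end RandomSets
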